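/- arXiv:2408.08277 — 2 statements merged into one kernel-verified Lean document; each statement's English description precedes it below -/
import Mathlib

section
/- Let T > 0. Let g, h, λ : [0,T] → ℝ be nonnegative, bounded, Borel measurable functions with h(t) > 0 for every t ∈ [0,T], let V : ℝ → ℝ be a continuous nondecreasing function with associated Lebesgue–Stieltjes measure μ_V, and let Φ : ℝ → ℝ be continuous, nondecreasing on [0,∞) with Φ(r) > 0 for all r > 0. Fix z₀ > 0 and define J(z) := ∫_{z₀}^{z} 1/Φ(r) dr for z > 0. If for every t ∈ [0,T] one has g(t) ≤ h(t) + ∫_{(t,T]} λ(s)·Φ(g(s)) dμ_V(s), then for every t ∈ [0,T] with g(t) > 0 one has J(g(t)) ≤ J(h*(t)) + ∫_{(t,T]} λ(s) dμ_V(s), where h*(t) := sup_{t ≤ s ≤ T} h(s). -/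
/-!
Put `H := sup_{[t,T]} h`, let `ν` be the measure `λ Φ(g) dμ_V` on `(t, T]` and
`w s := H + ν (s, ∞)`, so that the hypothesis reads `g ≤ w`. Because `1/Φ` is nonincreasing, the
chain rule `J(w t) - J(H) = ∫ dν / Φ(w)` of the atomless case survives the atoms of `μ_V` as the
inequality `∫_H^{w t} dr / Φ(r) ≤ ∫ dν / Φ(w)`. By the layer-cake formula this reduces to
`ν {s | ν (s, ∞) ≤ x} ≥ x` for `x ≤ ν ℝ`, which follows from inner regularity of `ν`. Finally
`dν / Φ(w) = λ Φ(g) / Φ(w) dμ_V ≤ λ dμ_V`.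
-/

open MeasureTheory Set

section MeasureIoi

variable {ν : Measure ℝ} [IsFiniteMeasure ν]

theorem measurable_measureReal_Ioi : Measurable fun s => ν.real (Ioi s) :=
  Antitone.measurable fun _ _ hab => measureReal_mono (Ioi_subset_Ioi hab)

theorem ofReal_le_measure_setOf_measureReal_Ioi_le {x : ℝ} (hxν : x ≤ ν.real univ) :
    ENNReal.ofReal x ≤ ν {s | ν.real (Ioi s) ≤ x} := by
  set L := {s | x < ν.real (Ioi s)}
  have hL : MeasurableSet L := measurableSet_lt measurable_const measurable_measureReal_Ioi
  have hxν' : ENNReal.ofReal x ≤ ν univ := ENNReal.ofReal_le_of_le_toReal hxν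
  -- inner regularity: a compact subset of the lower set `L` lies below its maximum, a point of `L`
  have hLx : ν L + ENNReal.ofReal x ≤ ν univ := by
    rw [← ENNReal.le_sub_iff_add_le_right ENNReal.ofReal_ne_top hxν', hL.measure_eq_iSup_isCompact]
    refine iSup₂_le fun K hKL => iSup_le fun hK => ?_
    rcases K.eq_empty_or_nonempty with rfl | hne
    · simp
    set b := sSup K
    refine ENNReal.le_sub_of_add_le_right ENNReal.ofReal_ne_top ?_
    calc ν K + ENNReal.ofReal x ≤ ν (Iic b) + ν (Iic b)ᶜ := by
          gcongr
          · exact fun s hs => le_csSup hK.bddAbove hs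
          · rw [compl_Iic]; exact ENNReal.ofReal_le_of_le_toReal (hKL (hK.sSup_mem hne)).le
      _ = ν univ := measure_add_measure_compl measurableSet_Iic
  have hcompl : {s | ν.real (Ioi s) ≤ x} = Lᶜ := by ext; simp [L]
  rw [hcompl]
  refine ENNReal.le_of_add_le_add_left (measure_ne_top ν L) ?_
  rwa [measure_add_measure_compl hL]

theorem lintegral_Ioc_le_lintegral_comp_measureReal_Ioi {φ : ℝ → ℝ} (hφ_meas : Measurable φ)
    (hφ_anti : AntitoneOn φ (Ici 0)) (hφ_nonneg : ∀ u, 0 ≤ u → 0 ≤ φ u) :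
    ∫⁻ u in Ioc 0 (ν.real univ), ENNReal.ofReal (φ u) ≤
      ∫⁻ s, ENNReal.ofReal (φ (ν.real (Ioi s))) ∂ν := by
  rw [lintegral_eq_lintegral_meas_lt _ ((ae_restrict_iff' measurableSet_Ioc).2
      (ae_of_all _ fun u hu => hφ_nonneg u hu.1.le)) hφ_meas.aemeasurable,
    lintegral_eq_lintegral_meas_lt _ (ae_of_all _ fun s => hφ_nonneg _ measureReal_nonneg)
      (hφ_meas.comp measurable_measureReal_Ioi).aemeasurable]
  refine lintegral_mono fun y => ?_
  rw [Measure.restrict_apply (measurableSet_lt measurable_const hφ_meas)]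
  set U := {u | y < φ u} ∩ Ioc 0 (ν.real univ)
  rcases U.eq_empty_or_nonempty with hU | hU
  · simp [hU]
  have hU_bdd : BddAbove U := ⟨_, fun u hu => hu.2.2⟩
  calc volume U ≤ volume (Ioc 0 (sSup U)) :=
        measure_mono fun u hu => ⟨hu.2.1, le_csSup hU_bdd hu⟩
    _ = ENNReal.ofReal (sSup U) := by rw [Real.volume_Ioc, sub_zero]
    _ ≤ ν {s | y < φ (ν.real (Ioi s))} := by
      refine le_of_forall_lt_imp_le_of_dense fun z hz => ?_
      have hz_top : z ≠ ⊤ := ne_top_of_lt hz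
      obtain ⟨u, hu, hzu⟩ :=
        exists_lt_of_lt_csSup hU ((ENNReal.lt_ofReal_iff_toReal_lt hz_top).1 hz)
      have hsub : {s | ν.real (Ioi s) ≤ z.toReal} ⊆ {s | y < φ (ν.real (Ioi s))} := fun s hs =>
        hu.1.trans_le (hφ_anti measureReal_nonneg hu.2.1.le (hs.trans hzu.le))
      calc z = ENNReal.ofReal z.toReal := (ENNReal.ofReal_toReal hz_top).symm
        _ ≤ ν {s | ν.real (Ioi s) ≤ z.toReal} :=
          ofReal_le_measure_setOf_measureReal_Ioi_le (hzu.le.trans hu.2.2)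
        _ ≤ _ := measure_mono hsub

theorem intervalIntegral_le_integral_comp_measureReal_Ioi {φ : ℝ → ℝ} (hφ_meas : Measurable φ)
    (hφ_anti : AntitoneOn φ (Ici 0)) (hφ_nonneg : ∀ u, 0 ≤ u → 0 ≤ φ u) :
    ∫ u in 0..ν.real univ, φ u ≤ ∫ s, φ (ν.real (Ioi s)) ∂ν := by
  have hφF_nonneg : ∀ s, 0 ≤ φ (ν.real (Ioi s)) := fun s => hφ_nonneg _ measureReal_nonneg
  have hφ_int : IntegrableOn φ (Ioc 0 (ν.real univ)) :=
    (hφ_anti.mono (by simp [uIcc_of_le, Icc_subset_Ici_self])).intervalIntegrable.1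
  have hφF_int : Integrable (fun s => φ (ν.real (Ioi s))) ν :=
    .of_bound (hφ_meas.comp measurable_measureReal_Ioi).aestronglyMeasurable (φ 0) <|
      ae_of_all _ fun s => by
        rw [Real.norm_of_nonneg (hφF_nonneg s)]
        exact hφ_anti self_mem_Ici measureReal_nonneg measureReal_nonneg
  rw [intervalIntegral.integral_of_le measureReal_nonneg,
    ← ENNReal.ofReal_le_ofReal_iff (integral_nonneg hφF_nonneg),
    ofReal_integral_eq_lintegral_ofReal hφ_int
      ((ae_restrict_iff' measurableSet_Ioc).2 (ae_of_all _ fun u hu => hφ_nonneg u hu.1.le)),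
    ofReal_integral_eq_lintegral_ofReal hφF_int (ae_of_all _ hφF_nonneg)]
  exact lintegral_Ioc_le_lintegral_comp_measureReal_Ioi hφ_meas hφ_anti hφ_nonneg

end MeasureIoi

theorem measureReal_restrict_withDensity_Ioi {μ : Measure ℝ} {ρ : ℝ → ℝ} {t T s : ℝ}
    (hρ_int : IntegrableOn ρ (Ioc t T) μ) (hρ : ∀ u ∈ Ioc t T, 0 ≤ ρ u) (hts : t ≤ s) :
    ((μ.restrict (Ioc t T)).withDensity fun u => ENNReal.ofReal (ρ u)).real (Ioi s) =
      ∫ u in Ioc s T, ρ u ∂μ := by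
  have hsub : Ioc s T ⊆ Ioc t T := Ioc_subset_Ioc_left hts
  rw [measureReal_def, withDensity_apply _ measurableSet_Ioi,
    Measure.restrict_restrict measurableSet_Ioi, inter_comm, Ioc_inter_Ioi, sup_eq_right.2 hts,
    integral_eq_lintegral_of_nonneg_ae
      ((ae_restrict_iff' measurableSet_Ioc).2 (ae_of_all _ fun u hu => hρ u (hsub hu)))
      (hρ_int.mono_set hsub).aestronglyMeasurable]

section Bihari

variable {Φ : ℝ → ℝ}

theorem nonneg_of_continuous_of_pos (hΦ_cont : Continuous Φ) (hΦ_pos : ∀ r, 0 < r → 0 < Φ r)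
    {r : ℝ} (hr : 0 ≤ r) : 0 ≤ Φ r := by
  have : Ici (0 : ℝ) ⊆ {r | 0 ≤ Φ r} := by
    rw [← closure_Ioi, (isClosed_le continuous_const hΦ_cont).closure_subset_iff]
    exact fun r hr => (hΦ_pos r hr).le
  exact this hr

theorem intervalIntegrable_inv_of_pos (hΦ_cont : Continuous Φ) (hΦ_pos : ∀ r, 0 < r → 0 < Φ r)
    {a b : ℝ} (ha : 0 < a) (hb : 0 < b) :
    IntervalIntegrable (fun r => (Φ r)⁻¹) volume a b :=
  (hΦ_cont.continuousOn.inv₀ fun r hr =>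
    (hΦ_pos r ((lt_min ha hb).trans_le hr.1)).ne').intervalIntegrable

theorem integral_inv_le_integral_inv_of_le (hΦ_cont : Continuous Φ) (hΦ_pos : ∀ r, 0 < r → 0 < Φ r)
    {a b c : ℝ} (hc : 0 < c) (ha : 0 < a) (hab : a ≤ b) :
    ∫ r in c..a, (Φ r)⁻¹ ≤ ∫ r in c..b, (Φ r)⁻¹ := by
  have hb := ha.trans_le hab
  rw [← sub_nonneg, intervalIntegral.integral_interval_sub_left
    (intervalIntegrable_inv_of_pos hΦ_cont hΦ_pos hc hb)
    (intervalIntegrable_inv_of_pos hΦ_cont hΦ_pos hc ha)]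
  exact intervalIntegral.integral_nonneg hab fun r hr =>
    inv_nonneg.2 (hΦ_pos r (ha.trans_le hr.1)).le

theorem integral_inv_le_integral_inv_add_measureReal_Ioi {ν : Measure ℝ} [IsFiniteMeasure ν]
    {H : ℝ} (hΦ_cont : Continuous Φ) (hΦ_mono : MonotoneOn Φ (Ici 0))
    (hΦ_pos : ∀ r, 0 < r → 0 < Φ r) (hH : 0 < H) :
    ∫ r in H..H + ν.real univ, (Φ r)⁻¹ ≤ ∫ s, (Φ (H + ν.real (Ioi s)))⁻¹ ∂ν := by
  have hHu : ∀ u ∈ Ici (0 : ℝ), 0 < H + u := fun u hu => add_pos_of_pos_of_nonneg hH hu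
  calc ∫ r in H..H + ν.real univ, (Φ r)⁻¹ = ∫ u in 0..ν.real univ, (Φ (H + u))⁻¹ := by
        rw [intervalIntegral.integral_comp_add_left (fun r => (Φ r)⁻¹), add_zero]
    _ ≤ _ := intervalIntegral_le_integral_comp_measureReal_Ioi (by fun_prop)
        (fun a ha b hb hab => inv_anti₀ (hΦ_pos _ (hHu a ha))
          (hΦ_mono (hHu a ha).le (hHu b hb).le (by linarith)))
        (fun u hu => inv_nonneg.2 (hΦ_pos _ (hHu u hu)).le)

theorem integral_inv_le_setIntegral_of_le_add_setIntegral {μ : Measure ℝ} {g lam : ℝ → ℝ}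
    {t T H : ℝ} (htT : t ≤ T) (hΦ_cont : Continuous Φ) (hΦ_mono : MonotoneOn Φ (Ici 0))
    (hΦ_pos : ∀ r, 0 < r → 0 < Φ r) (hH : 0 < H) (hgt : 0 < g t)
    (hg : ∀ s ∈ Ioc t T, 0 ≤ g s) (hlam : ∀ s ∈ Ioc t T, 0 ≤ lam s)
    (hρ_int : IntegrableOn (fun s => lam s * Φ (g s)) (Ioc t T) μ)
    (hlam_int : IntegrableOn lam (Ioc t T) μ)
    (hle : ∀ s ∈ Icc t T, g s ≤ H + ∫ u in Ioc s T, lam u * Φ (g u) ∂μ) :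
    ∫ r in H..g t, (Φ r)⁻¹ ≤ ∫ s in Ioc t T, lam s ∂μ := by
  set ρ := fun s => lam s * Φ (g s)
  have hρ_nonneg : ∀ s ∈ Ioc t T, 0 ≤ ρ s := fun s hs =>
    mul_nonneg (hlam s hs) (nonneg_of_continuous_of_pos hΦ_cont hΦ_pos (hg s hs))
  set ν := (μ.restrict (Ioc t T)).withDensity fun s => ENNReal.ofReal (ρ s)
  have : IsFiniteMeasure ν := isFiniteMeasure_withDensity_ofReal hρ_int.2
  have hν_Ioi : ∀ s ∈ Icc t T, ν.real (Ioi s) = ∫ u in Ioc s T, ρ u ∂μ := fun s hs =>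
    measureReal_restrict_withDensity_Ioi hρ_int hρ_nonneg hs.1
  have hν_univ : ν.real univ = ν.real (Ioi t) := by
    simp only [ν, measureReal_def, withDensity_apply _ measurableSet_Ioi,
      withDensity_apply _ MeasurableSet.univ, Measure.restrict_univ,
      Measure.restrict_restrict measurableSet_Ioi, inter_eq_right.2 Ioc_subset_Ioi_self]
  set w := fun s => H + ν.real (Ioi s)
  have hgw : ∀ s ∈ Icc t T, g s ≤ w s := fun s hs => by
    simpa only [w, hν_Ioi s hs] using hle s hs
  have hw_pos : ∀ s, 0 < w s := fun s => add_pos_of_pos_of_nonneg hH measureReal_nonneg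
  calc ∫ r in H..g t, (Φ r)⁻¹
      ≤ ∫ r in H..H + ν.real univ, (Φ r)⁻¹ := by
        rw [hν_univ]
        exact integral_inv_le_integral_inv_of_le hΦ_cont hΦ_pos hH hgt (hgw t (left_mem_Icc.2 htT))
    _ ≤ ∫ s, (Φ (w s))⁻¹ ∂ν :=
        integral_inv_le_integral_inv_add_measureReal_Ioi hΦ_cont hΦ_mono hΦ_pos hH
    _ = ∫ s in Ioc t T, ρ s * (Φ (w s))⁻¹ ∂μ := by
        rw [integral_withDensity_eq_integral_toReal_smul₀ hρ_int.aemeasurable.ennreal_ofReal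
          (ae_of_all _ fun _ => ENNReal.ofReal_lt_top)]
        refine setIntegral_congr_fun measurableSet_Ioc fun s hs => ?_
        simp [ENNReal.toReal_ofReal (hρ_nonneg s hs)]
    _ ≤ ∫ s in Ioc t T, lam s ∂μ := by
        refine integral_mono_of_nonneg ?_ hlam_int ?_
        · exact (ae_restrict_iff' measurableSet_Ioc).2 (ae_of_all _ fun s hs =>
            mul_nonneg (hρ_nonneg s hs) (inv_nonneg.2 (hΦ_pos _ (hw_pos s)).le))
        · refine (ae_restrict_iff' measurableSet_Ioc).2 (ae_of_all _ fun s hs => ?_)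
          rw [mul_inv_le_iff₀ (hΦ_pos _ (hw_pos s))]
          exact mul_le_mul_of_nonneg_left
            (hΦ_mono (hg s hs) (hw_pos s).le (hgw s (Ioc_subset_Icc_self hs))) (hlam s hs)

end Bihari

theorem bihari_general_general
    (T : ℝ)
    (g h lam : ℝ → ℝ)
    (hg_nonneg : ∀ t ∈ Icc (0:ℝ) T, 0 ≤ g t)
    (hh_pos : ∀ t ∈ Icc (0:ℝ) T, 0 < h t)
    (hlam_nonneg : ∀ t ∈ Icc (0:ℝ) T, 0 ≤ lam t)
    (hg_bdd : ∃ M : ℝ, ∀ t ∈ Icc (0:ℝ) T, g t ≤ M)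
    (hh_bdd : ∃ M : ℝ, ∀ t ∈ Icc (0:ℝ) T, h t ≤ M)
    (hlam_bdd : ∃ M : ℝ, ∀ t ∈ Icc (0:ℝ) T, lam t ≤ M)
    (hg_meas : Measurable g) (hlam_meas : Measurable lam)
    (V : StieltjesFunction ℝ)
    (Φ : ℝ → ℝ) (hΦ_cont : Continuous Φ)
    (hΦ_mono : MonotoneOn Φ (Ici 0))
    (hΦ_pos : ∀ r : ℝ, 0 < r → 0 < Φ r)
    (z₀ : ℝ) (hz₀ : 0 < z₀)
    (J : ℝ → ℝ) (hJ : ∀ z : ℝ, J z = ∫ r in z₀..z, (Φ r)⁻¹)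
    (hmain : ∀ t ∈ Icc (0:ℝ) T,
      g t ≤ h t + ∫ s in Ioc t T, lam s * Φ (g s) ∂V.measure) :
    ∀ t ∈ Icc (0:ℝ) T, 0 < g t →
      J (g t) ≤ J (sSup (h '' Icc t T)) + ∫ s in Ioc t T, lam s ∂V.measure := by
  intro t ht hgt
  obtain ⟨Mg, hMg⟩ := hg_bdd
  obtain ⟨Mh, hMh⟩ := hh_bdd
  obtain ⟨Ml, hMl⟩ := hlam_bdd
  have hIcc : Icc t T ⊆ Icc 0 T := Icc_subset_Icc_left ht.1
  have hIoc : Ioc t T ⊆ Icc 0 T := Ioc_subset_Icc_self.trans hIcc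
  have hh_le : ∀ s ∈ Icc t T, h s ≤ sSup (h '' Icc t T) := fun s hs =>
    le_csSup ⟨Mh, forall_mem_image.2 fun u hu => hMh u (hIcc hu)⟩ (mem_image_of_mem h hs)
  have hH_pos : 0 < sSup (h '' Icc t T) :=
    (hh_pos t ht).trans_le (hh_le t (left_mem_Icc.2 ht.2))
  have h_int : ∀ f : ℝ → ℝ, Measurable f → ∀ C, (∀ s ∈ Icc 0 T, 0 ≤ f s ∧ f s ≤ C) →
      IntegrableOn f (Ioc t T) V.measure := fun f hf C hC =>
    .of_bound measure_Ioc_lt_top hf.aestronglyMeasurable C <|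
      (ae_restrict_iff' measurableSet_Ioc).2 <| ae_of_all _ fun s hs => by
        rw [Real.norm_of_nonneg (hC s (hIoc hs)).1]; exact (hC s (hIoc hs)).2
  rw [hJ, hJ, ← sub_le_iff_le_add', intervalIntegral.integral_interval_sub_left
    (intervalIntegrable_inv_of_pos hΦ_cont hΦ_pos hz₀ hgt)
    (intervalIntegrable_inv_of_pos hΦ_cont hΦ_pos hz₀ hH_pos)]
  refine integral_inv_le_setIntegral_of_le_add_setIntegral ht.2 hΦ_cont hΦ_mono hΦ_pos hH_pos hgt
    (fun s hs => hg_nonneg s (hIoc hs)) (fun s hs => hlam_nonneg s (hIoc hs))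
    (h_int _ (hlam_meas.mul (hΦ_cont.measurable.comp hg_meas)) (Ml * Φ Mg) fun s hs => ?_)
    (h_int _ hlam_meas Ml fun s hs => ⟨hlam_nonneg s hs, hMl s hs⟩)
    fun s hs => (hmain s (hIcc hs)).trans (by gcongr; exact hh_le s hs)
  have hΦg := nonneg_of_continuous_of_pos hΦ_cont hΦ_pos (hg_nonneg s hs)
  exact ⟨mul_nonneg (hlam_nonneg s hs) hΦg, mul_le_mul (hMl s hs)
    (hΦ_mono (hg_nonneg s hs) ((hg_nonneg s hs).trans (hMg s hs)) (hMg s hs)) hΦg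
    ((hlam_nonneg s hs).trans (hMl s hs))⟩

/-- Extended Bihari inequality (general form), Lemma 2.3 of the paper. -/
theorem bihari_general
    (T : ℝ) (hT : 0 < T)
    (g h lam : ℝ → ℝ)
    (hg_nonneg : ∀ t ∈ Icc (0:ℝ) T, 0 ≤ g t)
    (hh_pos : ∀ t ∈ Icc (0:ℝ) T, 0 < h t)
    (hlam_nonneg : ∀ t ∈ Icc (0:ℝ) T, 0 ≤ lam t)
    (hg_bdd : ∃ M : ℝ, ∀ t ∈ Icc (0:ℝ) T, g t ≤ M)
    (hh_bdd : ∃ M : ℝ, ∀ t ∈ Icc (0:ℝ) T, h t ≤ M)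
    (hlam_bdd : ∃ M : ℝ, ∀ t ∈ Icc (0:ℝ) T, lam t ≤ M)
    (hg_meas : Measurable g) (hh_meas : Measurable h) (hlam_meas : Measurable lam)
    (V : StieltjesFunction ℝ) (hV_cont : Continuous ⇑V)
    (Φ : ℝ → ℝ) (hΦ_cont : Continuous Φ)
    (hΦ_mono : MonotoneOn Φ (Ici 0))
    (hΦ_pos : ∀ r : ℝ, 0 < r → 0 < Φ r)
    (z₀ : ℝ) (hz₀ : 0 < z₀)
    (J : ℝ → ℝ) (hJ : ∀ z : ℝ, J z = ∫ r in z₀..z, (Φ r)⁻¹)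
    (hmain : ∀ t ∈ Icc (0:ℝ) T,
      g t ≤ h t + ∫ s in Ioc t T, lam s * Φ (g s) ∂V.measure) :
    ∀ t ∈ Icc (0:ℝ) T, 0 < g t →
      J (g t) ≤ J (sSup (h '' Icc t T)) + ∫ s in Ioc t T, lam s ∂V.measure :=
  bihari_general_general T g h lam hg_nonneg hh_pos hlam_nonneg hg_bdd hh_bdd hlam_bdd hg_meas
    hlam_meas V Φ hΦ_cont hΦ_mono hΦ_pos z₀ hz₀ J hJ hmain
end

section
/- Let H be a real Hilbert space and let φ : H → ℝ be convex and lower semicontinuous with φ(0) = 0 and φ(x) ≥ 0 for all x ∈ H. Suppose there exist γ₀ > 0 and M₀ ≥ 0 such that φ(γ₀·h) ≤ M₀ for every h ∈ H with ‖h‖ ≤ 1. Let ε > 0, u ∈ H, and let j minimize v ↦ ½‖v − u‖² + ε·φ(v) over H. Then γ₀·‖u − j‖ ≤ ε·M₀ + ⟨u − j, u⟩. -/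
/-!
The minimizer `j` of `v ↦ ½‖v - u‖² + εφ(v)` satisfies the variational inequality
`⟪u - j, v - j⟫ ≤ ε(φ v - φ j)` for every `v`: compare `j` with `j + t(v - j)`, use convexity of
`φ` on that segment, divide by `t` and let `t → 0⁺`. Testing it with `v = γ₀h`, where
`h = ‖u - j‖⁻¹ (u - j)` has `‖h‖ ≤ 1` and `⟪u - j, h⟫ = ‖u - j‖` (also when `u = j`), gives
`γ₀‖u - j‖ ≤ ε(M₀ - φ j) + ⟪u - j, j⟫ ≤ εM₀ + ⟪u - j, u⟫`.
-/
open Set Filter Topology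
open scoped RealInnerProductSpace

section Prox

variable {H : Type*} [SeminormedAddCommGroup H] [InnerProductSpace ℝ H]

theorem exists_norm_le_one_real_inner_eq_norm (x : H) : ∃ h : H, ‖h‖ ≤ 1 ∧ ⟪x, h⟫ = ‖x‖ := by
  refine ⟨‖x‖⁻¹ • x, ?_, ?_⟩
  · rw [norm_smul, norm_inv, norm_norm]
    exact inv_mul_le_one
  · rw [real_inner_smul_right, real_inner_self_eq_norm_sq]
    rcases eq_or_ne ‖x‖ 0 with hx | hx
    · simp [hx]
    · field_simp

theorem real_inner_sub_le_of_isMin_prox_of_mem_Ioc {ψ : H → ℝ} (hψ : ConvexOn ℝ univ ψ) {u j : H}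
    (hj : ∀ v, 1 / 2 * ‖j - u‖ ^ 2 + ψ j ≤ 1 / 2 * ‖v - u‖ ^ 2 + ψ v) (v : H) {t : ℝ}
    (ht : t ∈ Ioc 0 1) : ⟪u - j, v - j⟫ ≤ ψ v - ψ j + t / 2 * ‖v - j‖ ^ 2 := by
  obtain ⟨ht0, ht1⟩ := ht
  have hconv : ψ (j + t • (v - j)) ≤ (1 - t) * ψ j + t * ψ v := by
    have hseg : j + t • (v - j) = (1 - t) • j + t • v := by module
    rw [hseg]
    exact hψ.2 (mem_univ j) (mem_univ v) (by linarith) ht0.le (by ring)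
  have hexpand : ‖j + t • (v - j) - u‖ ^ 2
      = ‖j - u‖ ^ 2 - 2 * t * ⟪u - j, v - j⟫ + t ^ 2 * ‖v - j‖ ^ 2 := by
    rw [show j + t • (v - j) - u = t • (v - j) - (u - j) by abel, norm_sub_sq_real,
      real_inner_smul_left, norm_smul, mul_pow, Real.norm_eq_abs, sq_abs, norm_sub_rev j u,
      real_inner_comm]
    ring
  have hmin := hj (j + t • (v - j))
  rw [hexpand] at hmin
  refine le_of_mul_le_mul_left ?_ ht0
  nlinarith

theorem real_inner_sub_le_of_isMin_prox {ψ : H → ℝ} (hψ : ConvexOn ℝ univ ψ) {u j : H}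
    (hj : ∀ v, 1 / 2 * ‖j - u‖ ^ 2 + ψ j ≤ 1 / 2 * ‖v - u‖ ^ 2 + ψ v) (v : H) :
    ⟪u - j, v - j⟫ ≤ ψ v - ψ j := by
  have hlim : Tendsto (fun t : ℝ ↦ ψ v - ψ j + t / 2 * ‖v - j‖ ^ 2) (𝓝[>] 0) (𝓝 (ψ v - ψ j)) := by
    have : Continuous (fun t : ℝ ↦ ψ v - ψ j + t / 2 * ‖v - j‖ ^ 2) := by fun_prop
    simpa using (this.tendsto 0).mono_left nhdsWithin_le_nhds
  exact ge_of_tendsto hlim (eventually_of_mem (Ioc_mem_nhdsGT one_pos)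
    fun t ht ↦ real_inner_sub_le_of_isMin_prox_of_mem_Ioc hψ hj v ht)

end Prox

theorem prox_local_bound_near_zero_general
    {H : Type*} [NormedAddCommGroup H] [InnerProductSpace ℝ H]
    (φ : H → ℝ) (hφ_convex : ConvexOn ℝ (univ : Set H) φ)
    (hφ_nonneg : ∀ x : H, 0 ≤ φ x)
    (γ₀ M₀ : ℝ)
    (hloc : ∀ h : H, ‖h‖ ≤ 1 → φ (γ₀ • h) ≤ M₀)
    (ε : ℝ) (hε : 0 < ε) (u : H) (j : H)
    (hj : ∀ v : H, 1/2 * ‖j - u‖^2 + ε * φ j ≤ 1/2 * ‖v - u‖^2 + ε * φ v) :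
    γ₀ * ‖u - j‖ ≤ ε * M₀ + (inner ℝ (u - j) u : ℝ) := by
  obtain ⟨h, hh1, hh⟩ := exists_norm_le_one_real_inner_eq_norm (u - j)
  have hvar := real_inner_sub_le_of_isMin_prox (hφ_convex.smul hε.le) hj (γ₀ • h)
  simp only [smul_eq_mul] at hvar
  have hεφ : ε * φ (γ₀ • h) ≤ ε * M₀ := mul_le_mul_of_nonneg_left (hloc h hh1) hε.le
  have hεj : 0 ≤ ε * φ j := mul_nonneg hε.le (hφ_nonneg j)
  have hju : ⟪u - j, j⟫ ≤ ⟪u - j, u⟫ := by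
    have hsq : 0 ≤ ⟪u - j, u - j⟫ := real_inner_self_nonneg
    rw [inner_sub_right] at hsq
    linarith
  calc γ₀ * ‖u - j‖ = ⟪u - j, γ₀ • h - j⟫ + ⟪u - j, j⟫ := by
        rw [inner_sub_right, real_inner_smul_right, hh]; ring
    _ ≤ ε * M₀ + ⟪u - j, u⟫ := by linarith

/-- The inequality `γ₀‖Dφ_ε(u)‖ ≤ εM₀ + ⟨Dφ_ε(u), u⟩` expressing local
boundedness of `φ` near `0` (Eqn. (delta1.r) in the proof of Theorem 2.5). -/
theorem prox_local_bound_near_zero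
    {H : Type*} [NormedAddCommGroup H] [InnerProductSpace ℝ H] [CompleteSpace H]
    (φ : H → ℝ) (hφ_convex : ConvexOn ℝ (univ : Set H) φ)
    (hφ_lsc : LowerSemicontinuous φ)
    (hφ0 : φ 0 = 0) (hφ_nonneg : ∀ x : H, 0 ≤ φ x)
    (γ₀ M₀ : ℝ) (hγ₀ : 0 < γ₀) (hM₀ : 0 ≤ M₀)
    (hloc : ∀ h : H, ‖h‖ ≤ 1 → φ (γ₀ • h) ≤ M₀)
    (ε : ℝ) (hε : 0 < ε) (u : H) (j : H)
    (hj : ∀ v : H, 1/2 * ‖j - u‖^2 + ε * φ j ≤ 1/2 * ‖v - u‖^2 + ε * φ v) :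
    γ₀ * ‖u - j‖ ≤ ε * M₀ + (inner ℝ (u - j) u : ℝ) :=
  prox_local_bound_near_zero_general φ hφ_convex hφ_nonneg γ₀ M₀ hloc ε hε u j hj
end
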